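/- arXiv:2202.11183 — 6 statements merged into one kernel-verified Lean document; each statement's English description precedes it below -/
import Mathlib

section
/- Every financial system (I, Π, p̄, e) with Π a Markov matrix, p̄ ≫ 0 and e ≥ 0 has at least one clearing vector, i.e., the map Φ(p) = (pΠ + e) ∧ p̄ has a fixed point in [0, p̄]. -/
def Markov {n : ℕ} (M : Matrix (Fin n) (Fin n) ℝ) : Prop :=
  (∀ i j, 0 ≤ M i j) ∧ ∀ i, ∑ j, M i j = 1

noncomputable def Phi {n : ℕ} (M : Matrix (Fin n) (Fin n) ℝ)
    (e pbar p : Fin n → ℝ) : Fin n → ℝ :=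
  fun j => min (Matrix.vecMul p M j + e j) (pbar j)


/-- every financial system has at least one clearing vector. -/
theorem clearing_vector_exists {n : ℕ} (M : Matrix (Fin n) (Fin n) ℝ)
    (pbar e : Fin n → ℝ) (hM : Markov M) (hpbar : ∀ i, 0 < pbar i)
    (he : 0 ≤ e) :
    ∃ p : Fin n → ℝ, 0 ≤ p ∧ p ≤ pbar ∧ Phi M e pbar p = p := by
  have hab : (0 : Fin n → ℝ) ≤ pbar := fun i => (hpbar i).le
  haveI : Fact ((0 : Fin n → ℝ) ≤ pbar) := ⟨hab⟩
  -- Phi maps Icc 0 pbar into itself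
  have hmem : ∀ p : Set.Icc (0 : Fin n → ℝ) pbar,
      Phi M e pbar p ∈ Set.Icc (0 : Fin n → ℝ) pbar := by
    intro p
    constructor
    · intro j
      have h1 : 0 ≤ Matrix.vecMul (p : Fin n → ℝ) M j := by
        rw [Matrix.vecMul, dotProduct]
        exact Finset.sum_nonneg fun i _ => mul_nonneg (p.2.1 i) (hM.1 i j)
      exact le_min (add_nonneg h1 (he j)) (hpbar j).le
    · intro j
      exact min_le_right _ _
  have hmono : ∀ p q : Set.Icc (0 : Fin n → ℝ) pbar, p ≤ q →
      Phi M e pbar p ≤ Phi M e pbar q := by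
    intro p q hpq j
    refine min_le_min (add_le_add_left ?_ _) le_rfl
    rw [Matrix.vecMul, Matrix.vecMul, dotProduct, dotProduct]
    exact Finset.sum_le_sum fun i _ => mul_le_mul_of_nonneg_right (hpq i) (hM.1 i j)
  let f : Set.Icc (0 : Fin n → ℝ) pbar →o Set.Icc (0 : Fin n → ℝ) pbar :=
    ⟨fun p => ⟨Phi M e pbar p, hmem p⟩, fun p q h => hmono p q h⟩
  have hfix := f.isFixedPt_lfp
  refine ⟨(f.lfp : Fin n → ℝ), f.lfp.2.1, f.lfp.2.2, ?_⟩
  exact congrArg Subtype.val hfix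
end

section
/- Let A be an increasing concave self-map on [0, b] ⊂ ℝᵈ. If there exists n ∈ ℕ such that Aⁿ(0) ≫ 0, then A is globally stable on [0, b]: it has a unique fixed point v̄ and Aᵐ(v) → v̄ for every v ∈ [0, b]. -/
open Filter Topology

section DuAux

variable {d : ℕ}

private lemma du_exists_delta (w c : Fin d → ℝ) (hw : ∀ i, 0 ≤ w i) (hc : ∀ i, 0 < c i) :
    ∃ δ : ℝ, 0 < δ ∧ ∀ i, δ * w i ≤ c i := by
  classical
  set s : Finset ℝ := insert 1 (Finset.univ.image (fun i => c i / (w i + 1))) with hs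
  have hne : s.Nonempty := ⟨1, by simp [hs]⟩
  refine ⟨s.min' hne, ?_, ?_⟩
  · rw [Finset.lt_min'_iff]
    intro r hr
    simp only [hs, Finset.mem_insert, Finset.mem_image, Finset.mem_univ, true_and] at hr
    rcases hr with h | ⟨i, rfl⟩
    · simp [h]
    · exact div_pos (hc i) (by nlinarith [hw i])
  · intro i
    have hmem : c i / (w i + 1) ∈ s := by
      simp only [hs, Finset.mem_insert, Finset.mem_image, Finset.mem_univ, true_and]
      exact Or.inr ⟨i, rfl⟩
    have h1 : s.min' hne ≤ c i / (w i + 1) := Finset.min'_le _ _ hmem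
    have h2 : 0 < w i + 1 := by nlinarith [hw i]
    have h3 : s.min' hne * w i ≤ (c i / (w i + 1)) * w i :=
      mul_le_mul_of_nonneg_right h1 (hw i)
    have h4 : (c i / (w i + 1)) * w i ≤ c i := by
      rw [div_mul_eq_mul_div, div_le_iff₀ h2]
      nlinarith [hc i, hw i]
    linarith

end DuAux

/-- an increasing concave self-map A on [0,b]
with Aⁿ 0 ≫ 0 for some n is globally stable. -/
theorem du_extension {d : ℕ} (b : Fin d → ℝ) (hb : ∀ i, 0 < b i)
    (A : (Fin d → ℝ) → (Fin d → ℝ))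
    (hself : ∀ x, 0 ≤ x → x ≤ b → 0 ≤ A x ∧ A x ≤ b)
    (hmono : ∀ x y, 0 ≤ x → x ≤ b → 0 ≤ y → y ≤ b → x ≤ y → A x ≤ A y)
    (hconc : ∀ x y, 0 ≤ x → x ≤ b → 0 ≤ y → y ≤ b →
      ∀ lam : ℝ, 0 ≤ lam → lam ≤ 1 →
        lam • A x + (1 - lam) • A y ≤ A (lam • x + (1 - lam) • y))
    (n : ℕ) (hpos : ∀ i, 0 < A^[n] 0 i) :
    ∃ vbar : Fin d → ℝ, (0 ≤ vbar ∧ vbar ≤ b ∧ A vbar = vbar) ∧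
      (∀ v, 0 ≤ v → v ≤ b → A v = v → v = vbar) ∧
      (∀ v, 0 ≤ v → v ≤ b → Tendsto (fun m => A^[m] v) atTop (𝓝 vbar)) := by
  classical
  have b0 : (0 : Fin d → ℝ) ≤ b := fun i => (hb i).le
  have zbox : (0 : Fin d → ℝ) ≤ 0 := le_refl _
  -- iterates stay in the box
  have iter_box : ∀ (u : Fin d → ℝ), 0 ≤ u → u ≤ b → ∀ m, 0 ≤ A^[m] u ∧ A^[m] u ≤ b := by
    intro u hu0 hub m
    induction m with
    | zero => simpa using ⟨hu0, hub⟩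
    | succ k ih => rw [Function.iterate_succ_apply']; exact hself _ ih.1 ih.2
  -- iterates are monotone
  have iter_mono : ∀ (u w : Fin d → ℝ), 0 ≤ u → u ≤ b → 0 ≤ w → w ≤ b → u ≤ w →
      ∀ m, A^[m] u ≤ A^[m] w := by
    intro u w hu0 hub hw0 hwb huw m
    induction m with
    | zero => simpa using huw
    | succ k ih =>
      rw [Function.iterate_succ_apply', Function.iterate_succ_apply']
      exact hmono _ _ (iter_box u hu0 hub k).1 (iter_box u hu0 hub k).2
        (iter_box w hw0 hwb k).1 (iter_box w hw0 hwb k).2 ih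
  -- scaling stays in the box
  have smul_box : ∀ (u : Fin d → ℝ), 0 ≤ u → u ≤ b → ∀ t : ℝ, 0 ≤ t → t ≤ 1 →
      0 ≤ t • u ∧ t • u ≤ b := by
    intro u hu0 hub t ht0 ht1
    constructor <;> intro i <;>
    · have h1 : (0:ℝ) ≤ u i := hu0 i
      have h2 : u i ≤ b i := hub i
      have h3 : (0:ℝ) < b i := hb i
      simp only [Pi.smul_apply, smul_eq_mul, Pi.zero_apply]
      nlinarith
  -- convex combinations stay in the box
  have combo_box : ∀ (u w : Fin d → ℝ), 0 ≤ u → u ≤ b → 0 ≤ w → w ≤ b →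
      ∀ t : ℝ, 0 ≤ t → t ≤ 1 → 0 ≤ t • u + (1 - t) • w ∧ t • u + (1 - t) • w ≤ b := by
    intro u w hu0 hub hw0 hwb t ht0 ht1
    constructor <;> intro i <;>
    · have h1 : (0:ℝ) ≤ u i := hu0 i
      have h2 : u i ≤ b i := hub i
      have h3 : (0:ℝ) ≤ w i := hw0 i
      have h4 : w i ≤ b i := hwb i
      simp only [Pi.add_apply, Pi.smul_apply, smul_eq_mul, Pi.zero_apply]
      nlinarith
  -- concavity along iterates
  have conc_iter : ∀ (u : Fin d → ℝ), 0 ≤ u → u ≤ b → ∀ t : ℝ, 0 ≤ t → t ≤ 1 → ∀ k,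
      t • A^[k] u + (1 - t) • A^[k] 0 ≤ A^[k] (t • u) := by
    intro u hu0 hub t ht0 ht1 k
    induction k with
    | zero => simp
    | succ k ih =>
      rw [Function.iterate_succ_apply', Function.iterate_succ_apply',
        Function.iterate_succ_apply']
      have h1 := hconc (A^[k] u) (A^[k] 0) (iter_box u hu0 hub k).1 (iter_box u hu0 hub k).2
        (iter_box 0 zbox b0 k).1 (iter_box 0 zbox b0 k).2 t ht0 ht1
      have hcomb := combo_box (A^[k] u) (A^[k] 0) (iter_box u hu0 hub k).1
        (iter_box u hu0 hub k).2 (iter_box 0 zbox b0 k).1 (iter_box 0 zbox b0 k).2 t ht0 ht1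
      have htu := smul_box u hu0 hub t ht0 ht1
      have h2 := hmono _ _ hcomb.1 hcomb.2 (iter_box (t • u) htu.1 htu.2 k).1
        (iter_box (t • u) htu.1 htu.2 k).2 ih
      exact le_trans h1 h2
  -- the two extremal orbits
  set x : ℕ → (Fin d → ℝ) := fun m => A^[m] 0 with hxdef
  set y : ℕ → (Fin d → ℝ) := fun m => A^[m] b with hydef
  have hA0 := hself 0 zbox b0
  have hAb := hself b b0 (le_refl b)
  have xmono : Monotone x := by
    apply monotone_nat_of_le_succ
    intro m
    have : x (m+1) = A^[m] (A 0) := by rw [hxdef]; exact Function.iterate_succ_apply A m 0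
    rw [this, hxdef]
    exact iter_mono 0 (A 0) zbox b0 hA0.1 hA0.2 hA0.1 m
  have yanti : Antitone y := by
    apply antitone_nat_of_succ_le
    intro m
    have : y (m+1) = A^[m] (A b) := by rw [hydef]; exact Function.iterate_succ_apply A m b
    rw [this, hydef]
    exact iter_mono (A b) b hAb.1 hAb.2 b0 (le_refl b) hAb.2 m
  have hxy : ∀ m, x m ≤ y m := fun m => iter_mono 0 b zbox b0 b0 (le_refl b) b0 m
  -- limits
  set v : Fin d → ℝ := fun i => ⨆ m, x m i with hvdef
  set w : Fin d → ℝ := fun i => ⨅ m, y m i with hwdef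
  have xbddA : ∀ i, BddAbove (Set.range fun m => x m i) := by
    intro i
    exact ⟨b i, by rintro r ⟨m, rfl⟩; exact (iter_box 0 zbox b0 m).2 i⟩
  have ybddB : ∀ i, BddBelow (Set.range fun m => y m i) := by
    intro i
    exact ⟨0, by rintro r ⟨m, rfl⟩; exact (iter_box b b0 (le_refl b) m).1 i⟩
  have hxv : ∀ m, x m ≤ v := fun m i => le_ciSup (xbddA i) m
  have hyw : ∀ m, w ≤ y m := fun m i => ciInf_le (ybddB i) m
  have hv0 : 0 ≤ v := by
    have := hxv 0
    simpa [hxdef] using this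
  have hvb : v ≤ b := fun i => ciSup_le (fun m => (iter_box 0 zbox b0 m).2 i)
  have hw0 : 0 ≤ w := fun i => le_ciInf (fun m => (iter_box b b0 (le_refl b) m).1 i)
  have hwb : w ≤ b := by
    have := hyw 0
    have hy0 : y 0 = b := by simp [hydef]
    intro i
    calc w i ≤ y 0 i := this i
      _ = b i := by rw [hy0]
  have hvw : v ≤ w := by
    intro i
    apply ciSup_le
    intro m
    apply le_ciInf
    intro k
    calc x m i ≤ x (max m k) i := xmono (le_max_left m k) i
      _ ≤ y (max m k) i := hxy (max m k) i
      _ ≤ y k i := yanti (le_max_right m k) i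
  have hvpos : ∀ i, 0 < v i := fun i => lt_of_lt_of_le (hpos i) (hxv n i)
  have hwpos : ∀ i, 0 < w i := fun i => lt_of_lt_of_le (hvpos i) (hvw i)
  have hxtend : ∀ i, Tendsto (fun m => x m i) atTop (𝓝 (v i)) := by
    intro i
    exact tendsto_atTop_ciSup (fun a c hac => xmono hac i) (xbddA i)
  have hytend : ∀ i, Tendsto (fun m => y m i) atTop (𝓝 (w i)) := by
    intro i
    exact tendsto_atTop_ciInf (fun a c hac => yanti hac i) (ybddB i)
  -- v is a fixed point
  have hvfix : A v = v := by
    have le1 : v ≤ A v := by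
      intro i
      apply ciSup_le
      intro m
      have h1 : x m ≤ x (m+1) := xmono (Nat.le_succ m)
      have h2 : x (m+1) = A (x m) := Function.iterate_succ_apply' A m 0
      have h3 : A (x m) ≤ A v := hmono _ _ (iter_box 0 zbox b0 m).1 (iter_box 0 zbox b0 m).2
        hv0 hvb (hxv m)
      calc x m i ≤ x (m+1) i := h1 i
        _ = A (x m) i := by rw [h2]
        _ ≤ A v i := h3 i
    have key : ∀ t : ℝ, 0 < t → t < 1 → ∀ i, t * A v i ≤ v i := by
      intro t ht0 ht1
      have hM : ∀ i, ∃ m, t * v i < x m i := by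
        intro i
        have h1 : t * v i < v i := by nlinarith [hvpos i]
        exact exists_lt_of_lt_ciSup h1
      choose mf hmf using hM
      set M := Finset.univ.sup mf with hM'
      have htv : t • v ≤ x M := by
        intro i
        have h1 : x (mf i) i ≤ x M i := xmono (Finset.le_sup (Finset.mem_univ i)) i
        have h2 := hmf i
        simp only [Pi.smul_apply, smul_eq_mul]
        linarith
      have htvbox := smul_box v hv0 hvb t ht0.le ht1.le
      have hstep : t • A v + (1 - t) • A 0 ≤ A (t • v) := by
        have := hconc v 0 hv0 hvb zbox b0 t ht0.le ht1.le
        simpa using this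
      have hmono2 : A (t • v) ≤ A (x M) := hmono _ _ htvbox.1 htvbox.2
        (iter_box 0 zbox b0 M).1 (iter_box 0 zbox b0 M).2 htv
      have hAxM : A (x M) = x (M+1) := (Function.iterate_succ_apply' A M 0).symm
      intro i
      have h1 : t * A v i + (1 - t) * A 0 i ≤ A (t • v) i := by
        have := hstep i
        simpa using this
      have h2 : (0 : ℝ) ≤ (1 - t) * A 0 i := mul_nonneg (by linarith) (hA0.1 i)
      have h3 : A (t • v) i ≤ x (M+1) i := by
        have := hmono2 i
        rw [hAxM] at this
        exact this
      have h4 : x (M+1) i ≤ v i := hxv (M+1) i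
      linarith
    have le2 : A v ≤ v := by
      intro i
      by_contra h
      push_neg at h
      have hvi : (0:ℝ) ≤ v i := hv0 i
      have hAvi : 0 < A v i := lt_of_le_of_lt hvi h
      set t : ℝ := (v i + A v i) / (2 * A v i) with ht'
      have ht0 : 0 < t := by
        apply div_pos
        · linarith
        · linarith
      have ht1 : t < 1 := by
        rw [div_lt_one (by linarith)]
        linarith
      have := key t ht0 ht1 i
      rw [ht', div_mul_eq_mul_div, div_le_iff₀ (by linarith : (0:ℝ) < 2 * A v i)] at this
      nlinarith
    exact le_antisymm le2 le1
  -- w is a fixed point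
  have hwfix : A w = w := by
    have le1 : A w ≤ w := by
      intro i
      apply le_ciInf
      intro m
      have h2 : y (m+1) = A (y m) := Function.iterate_succ_apply' A m b
      have h3 : A w ≤ A (y m) := hmono _ _ hw0 hwb (iter_box b b0 (le_refl b) m).1
        (iter_box b b0 (le_refl b) m).2 (hyw m)
      calc A w i ≤ A (y m) i := h3 i
        _ = y (m+1) i := by rw [h2]
        _ ≤ y m i := yanti (Nat.le_succ m) i
    have key : ∀ t : ℝ, 0 < t → t < 1 → ∀ i, t * w i ≤ A w i := by
      intro t ht0 ht1
      have hM : ∀ i, ∃ m, t * y m i < w i := by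
        intro i
        have h1 : (⨅ m, y m i) < w i / t := by
          rw [hwdef]
          rw [lt_div_iff₀ ht0]
          have : (⨅ m, y m i) = w i := rfl
          rw [this]
          nlinarith [hwpos i]
        obtain ⟨m, hm⟩ := exists_lt_of_ciInf_lt h1
        exact ⟨m, by rwa [← lt_div_iff₀' ht0]⟩
      choose mf hmf using hM
      set M := Finset.univ.sup mf with hM'
      have hty : t • y M ≤ w := by
        intro i
        have h1 : y M i ≤ y (mf i) i := yanti (Finset.le_sup (Finset.mem_univ i)) i
        have h2 := hmf i
        simp only [Pi.smul_apply, smul_eq_mul]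
        nlinarith
      have hyMbox := iter_box b b0 (le_refl b) M
      have htybox := smul_box (y M) hyMbox.1 hyMbox.2 t ht0.le ht1.le
      have hstep : t • A (y M) + (1 - t) • A 0 ≤ A (t • y M) := by
        have := hconc (y M) 0 hyMbox.1 hyMbox.2 zbox b0 t ht0.le ht1.le
        simpa using this
      have hmono2 : A (t • y M) ≤ A w := hmono _ _ htybox.1 htybox.2 hw0 hwb hty
      have hAyM : A (y M) = y (M+1) := (Function.iterate_succ_apply' A M b).symm
      intro i
      have h1 : t * A (y M) i + (1 - t) * A 0 i ≤ A (t • y M) i := by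
        have := hstep i
        simpa using this
      have h2 : (0 : ℝ) ≤ (1 - t) * A 0 i := mul_nonneg (by linarith) (hA0.1 i)
      have h3 : w i ≤ y (M+1) i := hyw (M+1) i
      have h4 : t * w i ≤ t * y (M+1) i := mul_le_mul_of_nonneg_left h3 ht0.le
      rw [hAyM] at h1
      have h6 := hmono2 i
      linarith
    have le2 : w ≤ A w := by
      intro i
      by_contra h
      push_neg at h
      set t : ℝ := (A w i + w i) / (2 * w i) with ht'
      have hwi : 0 < w i := hwpos i
      have hAwi : 0 ≤ A w i := (hself w hw0 hwb).1 i
      have ht0 : 0 < t := by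
        apply div_pos
        · linarith
        · linarith
      have ht1 : t < 1 := by
        rw [div_lt_one (by linarith)]
        linarith
      have := key t ht0 ht1 i
      rw [ht', div_mul_eq_mul_div, div_le_iff₀ (by linarith : (0:ℝ) < 2 * w i)] at this
      nlinarith
    exact le_antisymm le1 le2
  -- w ≤ v via the concavity / sSup argument
  have hwv : w ≤ v := by
    set S : Set ℝ := {t | t ∈ Set.Icc (0:ℝ) 1 ∧ t • w ≤ v} with hSdef
    have hS0 : (0:ℝ) ∈ S := by
      constructor
      · exact ⟨le_refl 0, zero_le_one⟩
      · simpa using hv0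
    have hSbdd : BddAbove S := ⟨1, fun t ht => ht.1.2⟩
    have hSclosed : IsClosed S := by
      have : S = Set.Icc (0:ℝ) 1 ∩ ⋂ i, (fun t : ℝ => t * w i) ⁻¹' Set.Iic (v i) := by
        ext t
        simp only [hSdef, Set.mem_setOf_eq, Set.mem_inter_iff, Set.mem_iInter,
          Set.mem_preimage, Set.mem_Iic]
        constructor
        · rintro ⟨h1, h2⟩; exact ⟨h1, fun i => h2 i⟩
        · rintro ⟨h1, h2⟩; exact ⟨h1, fun i => h2 i⟩
      rw [this]
      exact isClosed_Icc.inter (isClosed_iInter fun i =>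
        (isClosed_Iic).preimage (continuous_id.mul continuous_const))
    set tstar : ℝ := sSup S with htstar
    have hmem : tstar ∈ S := hSclosed.csSup_mem ⟨0, hS0⟩ hSbdd
    have ht0 : 0 ≤ tstar := hmem.1.1
    have ht1 : tstar ≤ 1 := hmem.1.2
    have hts1 : tstar = 1 := by
      by_contra hne
      have htlt : tstar < 1 := lt_of_le_of_ne ht1 hne
      -- chain inequality
      have hvn : A^[n] v = v := Function.iterate_fixed hvfix n
      have hwn : A^[n] w = w := Function.iterate_fixed hwfix n
      have htwbox := smul_box w hw0 hwb tstar ht0 ht1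
      have hchain1 : A^[n] (tstar • w) ≤ A^[n] v := iter_mono _ _ htwbox.1 htwbox.2 hv0 hvb
        hmem.2 n
      have hchain2 := conc_iter w hw0 hwb tstar ht0 ht1 n
      rw [hwn] at hchain2
      -- so: tstar • w + (1 - tstar) • x n ≤ v
      have hkey : tstar • w + (1 - tstar) • x n ≤ v := by
        rw [hvn] at hchain1
        calc tstar • w + (1 - tstar) • x n = tstar • w + (1 - tstar) • A^[n] 0 := by rw [hxdef]
          _ ≤ A^[n] (tstar • w) := hchain2
          _ ≤ v := hchain1
      obtain ⟨δ, hδ0, hδ⟩ := du_exists_delta w (fun i => (1 - tstar) * x n i)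
        (fun i => hw0 i) (fun i => mul_pos (by linarith) (hpos i))
      set t' : ℝ := min 1 (tstar + δ) with ht'
      have ht'S : t' ∈ S := by
        constructor
        · exact ⟨le_min zero_le_one (by linarith), min_le_left _ _⟩
        · intro i
          have h1 : t' * w i ≤ (tstar + δ) * w i :=
            mul_le_mul_of_nonneg_right (min_le_right _ _) (hw0 i)
          have h2 := hδ i
          have h3 := hkey i
          simp only [Pi.add_apply, Pi.smul_apply, smul_eq_mul] at h3 ⊢
          nlinarith
      have h4 : t' ≤ tstar := le_csSup hSbdd ht'S
      have h5 : tstar < t' := lt_min htlt (by linarith)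
      linarith
    have := hmem.2
    rw [hts1, one_smul] at this
    exact this
  have hwveq : w = v := le_antisymm hwv hvw
  -- assemble
  refine ⟨v, ⟨hv0, hvb, hvfix⟩, ?_, ?_⟩
  · intro u hu0 hub hufix
    have hun : ∀ m, A^[m] u = u := Function.iterate_fixed hufix
    have h1 : v ≤ u := by
      intro i
      apply ciSup_le
      intro m
      have := iter_mono 0 u zbox b0 hu0 hub hu0 m
      rw [hun m] at this
      exact this i
    have h2 : u ≤ w := by
      intro i
      apply le_ciInf
      intro m
      have := iter_mono u b hu0 hub b0 (le_refl b) hub m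
      rw [hun m] at this
      exact this i
    rw [hwveq] at h2
    exact le_antisymm h2 h1
  · intro u hu0 hub
    rw [tendsto_pi_nhds]
    intro i
    have hlow : ∀ m, x m i ≤ A^[m] u i := fun m =>
      iter_mono 0 u zbox b0 hu0 hub hu0 m i
    have hhigh : ∀ m, A^[m] u i ≤ y m i := fun m =>
      iter_mono u b hu0 hub b0 (le_refl b) hub m i
    have hyv : Tendsto (fun m => y m i) atTop (𝓝 (v i)) := by
      have := hytend i
      rwa [hwveq] at this
    exact tendsto_of_tendsto_of_tendsto_of_le_of_le (hxtend i) hyv hlow hhigh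
end

section
/- Let Φ(p) = (pΠ + e) ∧ p̄ on [0, p̄] with Π Markov, p̄ ≫ 0, e ≥ 0. If every node of the financial system is cash accessible, then Φⁿ(0) ≫ 0 where n is the number of nodes. -/
/-- `j` is accessible from `i` under `M`: either `j = i` or some power of `M`
has positive `(i, j)` entry. -/
def Access {n : ℕ} (M : Matrix (Fin n) (Fin n) ℝ) (i j : Fin n) : Prop :=
  j = i ∨ ∃ k : ℕ, 0 < k ∧ 0 < (M ^ k) i j

/-- `j` is cash accessible: accessible from some node with positive cash. -/
def CashAcc {n : ℕ} (M : Matrix (Fin n) (Fin n) ℝ) (e : Fin n → ℝ)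
    (j : Fin n) : Prop :=
  ∃ i, 0 < e i ∧ Access M i j

/-- if every node is cash accessible then Φⁿ 0 ≫ 0. -/
theorem phi_iterate_pos {n : ℕ} (M : Matrix (Fin n) (Fin n) ℝ)
    (pbar e : Fin n → ℝ) (hM : Markov M) (hpbar : ∀ i, 0 < pbar i)
    (he : 0 ≤ e) (hca : ∀ j, CashAcc M e j) :
    ∀ j, 0 < (Phi M e pbar)^[n] 0 j := by
  classical
  obtain ⟨hM0, -⟩ := hM
  set F : ℕ → Fin n → ℝ := fun k => (Phi M e pbar)^[k] 0 with hF
  have hFsucc : ∀ k, F (k+1) = Phi M e pbar (F k) := fun k =>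
    Function.iterate_succ_apply' _ k 0
  have hPhi : ∀ p j, Phi M e pbar p j = min ((∑ i, p i * M i j) + e j) (pbar j) := by
    intro p j
    simp [Phi, Matrix.vecMul, dotProduct]
  have hnonneg : ∀ k j, 0 ≤ F k j := by
    intro k
    induction k with
    | zero => intro j; simp [hF]
    | succ k ih =>
      intro j
      rw [hFsucc, hPhi]
      exact le_min (add_nonneg (Finset.sum_nonneg fun i _ =>
        mul_nonneg (ih i) (hM0 i j)) (he j)) (hpbar j).le
  have hstep : ∀ k i j, 0 < F k i → 0 < M i j → 0 < F (k+1) j := by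
    intro k i j hi hij
    rw [hFsucc, hPhi]
    refine lt_min (lt_of_lt_of_le ?_ (le_add_of_nonneg_right (he j))) (hpbar j)
    exact Finset.sum_pos' (fun l _ => mul_nonneg (hnonneg k l) (hM0 l j))
      ⟨i, Finset.mem_univ i, mul_pos hi hij⟩
  have hcash : ∀ k j, 0 < e j → 0 < F (k+1) j := by
    intro k j hj
    rw [hFsucc, hPhi]
    refine lt_min (lt_of_lt_of_le hj (le_add_of_nonneg_left
      (Finset.sum_nonneg fun i _ => mul_nonneg (hnonneg k i) (hM0 i j)))) (hpbar j)
  have hrev : ∀ k j, 0 < F (k+1) j → 0 < e j ∨ ∃ i, 0 < F k i ∧ 0 < M i j := by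
    intro k j hj
    by_contra h
    push_neg at h
    obtain ⟨he0, hi0⟩ := h
    have hez : e j = 0 := le_antisymm he0 (he j)
    have hsum : (∑ i, F k i * M i j) ≤ 0 := by
      refine Finset.sum_nonpos fun i _ => ?_
      rcases lt_or_ge 0 (F k i) with h1 | h1
      · have h2 : M i j = 0 := le_antisymm (hi0 i h1) (hM0 i j)
        simp [h2]
      · exact mul_nonpos_of_nonpos_of_nonneg h1 (hM0 i j)
    rw [hFsucc, hPhi] at hj
    have hlt : (0:ℝ) < (∑ i, F k i * M i j) + e j := lt_of_lt_of_le hj (min_le_left _ _)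
    linarith
  have hmono : ∀ k j, F k j ≤ F (k+1) j := by
    intro k
    induction k with
    | zero => intro j; simpa [hF] using hnonneg 1 j
    | succ k ih =>
      intro j
      rw [hFsucc, hFsucc, hPhi, hPhi]
      have hs : (∑ i, F k i * M i j) ≤ ∑ i, F (k+1) i * M i j :=
        Finset.sum_le_sum fun i _ => mul_le_mul_of_nonneg_right (ih i) (hM0 i j)
      exact min_le_min (by linarith) le_rfl
  have hmono' : ∀ k m j, k ≤ m → F k j ≤ F m j := fun k m j h =>
    (monotone_nat_of_le_succ (fun k => hmono k j)) h
  set S : ℕ → Finset (Fin n) := fun k => Finset.univ.filter (fun j => 0 < F k j) with hSdef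
  have hS : ∀ k j, j ∈ S k ↔ 0 < F k j := by intro k j; simp [hSdef]
  have hSmono : ∀ k m, k ≤ m → S k ⊆ S m := fun k m h j hj =>
    (hS m j).2 (lt_of_lt_of_le ((hS k j).1 hj) (hmono' k m j h))
  have hstat : ∀ k, S (k+1) ⊆ S k → ∀ m, S (k+m) ⊆ S k := by
    intro k hk m
    induction m with
    | zero => exact subset_rfl
    | succ m ih =>
      intro j hj
      have hj' : 0 < F (k+m+1) j := (hS _ j).1 hj
      rcases hrev _ j hj' with h | ⟨i, hi, hij⟩
      · exact hk ((hS _ j).2 (hcash k j h))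
      · have hik : i ∈ S k := ih ((hS _ i).2 hi)
        exact hk ((hS _ j).2 (hstep k i j ((hS k i).1 hik) hij))
  intro j
  have hn : 0 < n := j.pos
  obtain ⟨i0, hi0, -⟩ := hca j
  have hS1 : i0 ∈ S 1 := (hS 1 i0).2 (hcash 0 i0 hi0)
  have hclaim : ∀ k, S (k+1) ⊆ S k ∨ k + 1 ≤ (S (k+1)).card := by
    intro k
    induction k with
    | zero => exact Or.inr (Finset.card_pos.2 ⟨i0, hS1⟩)
    | succ k ih =>
      by_cases hsub : S (k+2) ⊆ S (k+1)
      · exact Or.inl hsub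
      · rcases ih with h | h
        · exact absurd ((hstat k h 2).trans (hSmono k (k+1) (Nat.le_succ k))) hsub
        · refine Or.inr ?_
          have hss : S (k+1) ⊂ S (k+2) :=
            Finset.ssubset_def.2 ⟨hSmono (k+1) (k+2) (Nat.le_succ _), hsub⟩
          have h1 := Finset.card_lt_card hss
          have h2 : (S (k+2)).card = (S (k+1+1)).card := rfl
          omega
  have hfin : S (n+1) ⊆ S n := by
    rcases hclaim n with h | h
    · exact h
    · have : (S (n+1)).card ≤ n := by
        simpa using Finset.card_le_univ (S (n+1))
      omega
  have hall : ∀ m, S m ⊆ S n := by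
    intro m
    rcases le_or_gt m n with h | h
    · exact hSmono m n h
    · have hm : n + (m - n) = m := by omega
      have := hstat n hfin (m - n)
      rwa [hm] at this
  have hpownn : ∀ k (i l : Fin n), 0 ≤ (M^k) i l := by
    intro k
    induction k with
    | zero =>
      intro i l
      rw [pow_zero]
      by_cases h : i = l <;> simp [Matrix.one_apply, h]
    | succ k ih =>
      intro i l
      rw [pow_succ, Matrix.mul_apply]
      exact Finset.sum_nonneg fun x _ => mul_nonneg (ih i x) (hM0 x l)
  have hpath : ∀ k (i l : Fin n), 0 < e i → 0 < (M^k) i l → l ∈ S (k+1) := by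
    intro k
    induction k with
    | zero =>
      intro i l hei hpos
      rw [pow_zero] at hpos
      have hil : i = l := by
        by_contra hne
        rw [Matrix.one_apply_ne' ?_] at hpos
        · exact lt_irrefl 0 hpos
        · exact fun h => hne h.symm
      subst hil
      exact (hS 1 i).2 (hcash 0 i hei)
    | succ k ih =>
      intro i l hei hpos
      rw [pow_succ, Matrix.mul_apply] at hpos
      have hex : ∃ x, 0 < (M^k) i x * M x l := by
        by_contra hc
        push_neg at hc
        have : (∑ x, (M^k) i x * M x l) ≤ 0 := Finset.sum_nonpos fun x _ => hc x
        linarith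
      obtain ⟨x, hx⟩ := hex
      have hx1 : 0 < (M^k) i x ∧ 0 < M x l := by
        rcases mul_pos_iff.1 hx with h | h
        · exact h
        · exact absurd h.1 (not_lt.2 (hpownn k i x))
      have hxS : x ∈ S (k+1) := ih i x hei hx1.1
      exact (hS (k+2) l).2 (hstep (k+1) x l ((hS (k+1) x).1 hxS) hx1.2)
  obtain ⟨i, hei, hacc⟩ := hca j
  rcases hacc with rfl | ⟨k, hk, hpos⟩
  · exact (hS n j).1 (hSmono 1 n hn ((hS 1 j).2 (hcash 0 j hei)))
  · exact (hS n j).1 (hall (k+1) (hpath k i j hei hpos))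
end

section
/- If every node of a financial system (I, Π, p̄, e) (with Π Markov, p̄ ≫ 0, e ≥ 0) is cash accessible, then the system has a unique clearing vector p*, p* ≫ 0, and Φᵏ(p) → p* for every p ∈ [0, p̄]. -/
open Filter Topology

section helpers

variable {n : ℕ} {M : Matrix (Fin n) (Fin n) ℝ} {pbar e : Fin n → ℝ}

lemma vecMul_apply' (p : Fin n → ℝ) (j : Fin n) :
    Matrix.vecMul p M j = ∑ i, p i * M i j := by
  simp [Matrix.vecMul, dotProduct]

lemma vecMul_nonneg' (hM : Markov M) {p : Fin n → ℝ} (hp : 0 ≤ p) (j : Fin n) :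
    0 ≤ Matrix.vecMul p M j := by
  rw [vecMul_apply']
  exact Finset.sum_nonneg fun i _ => mul_nonneg (hp i) (hM.1 i j)

lemma phi_mono (hM : Markov M) {p q : Fin n → ℝ} (h : p ≤ q) :
    Phi M e pbar p ≤ Phi M e pbar q := by
  intro j
  refine min_le_min (add_le_add_left ?_ _) le_rfl
  rw [vecMul_apply', vecMul_apply']
  exact Finset.sum_le_sum fun i _ => mul_le_mul_of_nonneg_right (h i) (hM.1 i j)

lemma phi_nonneg (hM : Markov M) (he : 0 ≤ e) (hpbar : ∀ i, 0 < pbar i)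
    {p : Fin n → ℝ} (hp : 0 ≤ p) : 0 ≤ Phi M e pbar p := by
  intro j
  exact le_min (add_nonneg (vecMul_nonneg' hM hp j) (he j)) (hpbar j).le

lemma phi_le_pbar (p : Fin n → ℝ) : Phi M e pbar p ≤ pbar :=
  fun j => min_le_right _ _

lemma phi_cont : Continuous (Phi M e pbar) := by
  refine continuous_pi fun j => Continuous.min (Continuous.add ?_ continuous_const)
    continuous_const
  have h : (fun p : Fin n → ℝ => Matrix.vecMul p M j) = fun p => ∑ i, p i * M i j := by
    funext p; exact vecMul_apply' p j
  rw [h]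
  exact continuous_finset_sum _ fun i _ => (continuous_apply i).mul continuous_const

lemma pow_nonneg' (hM : Markov M) (k : ℕ) (i j : Fin n) : 0 ≤ (M ^ k) i j := by
  induction k generalizing i j with
  | zero => simp [Matrix.one_apply]; positivity
  | succ k ih =>
    rw [pow_succ, Matrix.mul_apply]
    exact Finset.sum_nonneg fun l _ => mul_nonneg (ih i l) (hM.1 l j)

lemma fix_pos (hM : Markov M) (hpbar : ∀ i, 0 < pbar i) (he : 0 ≤ e)
    (hca : ∀ j, CashAcc M e j) {p : Fin n → ℝ} (hp0 : 0 ≤ p)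
    (hfix : Phi M e pbar p = p) : ∀ j, 0 < p j := by
  have base : ∀ j, 0 < e j → 0 < p j := by
    intro j hej
    have := congrFun hfix j
    rw [← this]
    exact lt_min (add_pos_of_nonneg_of_pos (vecMul_nonneg' hM hp0 j) hej) (hpbar j)
  have key : ∀ k : ℕ, ∀ i j, 0 < e i → 0 < (M ^ k) i j → 0 < p j := by
    intro k
    induction k with
    | zero =>
      intro i j hei hij
      have hij' : i = j := by
        by_contra hne
        rw [pow_zero, Matrix.one_apply_ne' (Ne.symm hne)] at hij
        exact lt_irrefl 0 hij
      exact hij' ▸ base i hei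
    | succ k ih =>
      intro i j hei hij
      rw [pow_succ, Matrix.mul_apply] at hij
      have hex : ∃ l, 0 < (M ^ k) i l * M l j := by
        by_contra h
        push_neg at h
        have : (∑ l, (M ^ k) i l * M l j) ≤ 0 := Finset.sum_nonpos fun l _ => h l
        linarith
      obtain ⟨l, hl⟩ := hex
      have h1 : 0 < (M ^ k) i l := by
        rcases mul_pos_iff.mp hl with ⟨h, _⟩ | ⟨h, _⟩
        · exact h
        · exact absurd (pow_nonneg' hM k i l) (not_le.mpr h)
      have h2 : 0 < M l j := by
        rcases mul_pos_iff.mp hl with ⟨_, h⟩ | ⟨h, _⟩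
        · exact h
        · exact absurd (pow_nonneg' hM k i l) (not_le.mpr h)
      have hpl : 0 < p l := ih i l hei h1
      have hvm : 0 < Matrix.vecMul p M j := by
        rw [vecMul_apply']
        have hs := Finset.single_le_sum (f := fun i => p i * M i j)
          (fun i _ => mul_nonneg (hp0 i) (hM.1 i j)) (Finset.mem_univ l)
        calc (0:ℝ) < p l * M l j := mul_pos hpl h2
          _ ≤ _ := hs
      rw [← congrFun hfix j]
      exact lt_min (add_pos_of_pos_of_nonneg hvm (he j)) (hpbar j)
  intro j
  obtain ⟨i, hei, hacc⟩ := hca j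
  rcases hacc with rfl | ⟨k, _, hk⟩
  · exact base j hei
  · exact key k i j hei hk

lemma sum_vecMul' (hM : Markov M) (q : Fin n → ℝ) :
    ∑ j, Matrix.vecMul q M j = ∑ i, q i := by
  calc ∑ j, Matrix.vecMul q M j = ∑ j, ∑ i, q i * M i j := by
        exact Finset.sum_congr rfl fun j _ => vecMul_apply' q j
    _ = ∑ i, ∑ j, q i * M i j := Finset.sum_comm
    _ = ∑ i, q i * ∑ j, M i j := by
        exact Finset.sum_congr rfl fun i _ => (Finset.mul_sum _ _ _).symm
    _ = ∑ i, q i := by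
        exact Finset.sum_congr rfl fun i _ => by rw [hM.2 i, mul_one]

lemma min_sub_min_le {a b c : ℝ} (hba : b ≤ a) : min a c - min b c ≤ a - b := by
  rcases min_cases a c with ⟨h1, h2⟩ | ⟨h1, h2⟩ <;>
    rcases min_cases b c with ⟨h3, h4⟩ | ⟨h3, h4⟩ <;> rw [h1, h3] <;> linarith

lemma fix_unique_le (hM : Markov M) (hpbar : ∀ i, 0 < pbar i) (he : 0 ≤ e)
    (hca : ∀ j, CashAcc M e j) {p s : Fin n → ℝ} (hp0 : 0 ≤ p) (hps : p ≤ s)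
    (hsb : s ≤ pbar) (hfp : Phi M e pbar p = p) (hfs : Phi M e pbar s = s) :
    p = s := by
  classical
  have hvmle : ∀ j, Matrix.vecMul p M j ≤ Matrix.vecMul s M j := by
    intro j
    rw [vecMul_apply', vecMul_apply']
    exact Finset.sum_le_sum fun i _ => mul_le_mul_of_nonneg_right (hps i) (hM.1 i j)
  -- componentwise inequality
  have hle : ∀ j, s j - p j ≤ Matrix.vecMul s M j - Matrix.vecMul p M j := by
    intro j
    have h1 := congrFun hfs j
    have h2 := congrFun hfp j
    rw [← h1, ← h2]
    have := min_sub_min_le (a := Matrix.vecMul s M j + e j)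
      (b := Matrix.vecMul p M j + e j) (c := pbar j)
      (add_le_add_left (hvmle j) _)
    simp only [Phi]
    linarith
  -- sums are equal
  have hsum0 : ∑ j, ((Matrix.vecMul s M j - Matrix.vecMul p M j) - (s j - p j)) = 0 := by
    have h1 : ∑ j, (Matrix.vecMul s M j - Matrix.vecMul p M j) = ∑ j, (s j - p j) := by
      rw [Finset.sum_sub_distrib, Finset.sum_sub_distrib, sum_vecMul' hM, sum_vecMul' hM]
    rw [Finset.sum_sub_distrib, h1, sub_self]
  have heq : ∀ j, s j - p j = Matrix.vecMul s M j - Matrix.vecMul p M j := by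
    intro j
    have := (Finset.sum_eq_zero_iff_of_nonneg
      (fun j _ => sub_nonneg.2 (hle j))).1 hsum0 j (Finset.mem_univ j)
    linarith
  -- where strict: both fixed at the affine branch
  have hdef : ∀ j, p j < s j →
      p j = Matrix.vecMul p M j + e j ∧ s j = Matrix.vecMul s M j + e j := by
    intro j hj
    set a := Matrix.vecMul s M j + e j with ha
    set b := Matrix.vecMul p M j + e j with hb
    have hab : b ≤ a := add_le_add_left (hvmle j) _
    have hd : s j - p j = a - b := by rw [heq j]; ring
    have hsj : s j = min a (pbar j) := (congrFun hfs j).symm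
    have hpj : p j = min b (pbar j) := (congrFun hfp j).symm
    rcases min_cases a (pbar j) with ⟨h1, h2⟩ | ⟨h1, h2⟩ <;>
      rcases min_cases b (pbar j) with ⟨h3, h4⟩ | ⟨h3, h4⟩ <;>
      rw [h1] at hsj <;> rw [h3] at hpj <;> constructor <;> linarith
  set S : Finset (Fin n) := Finset.filter (fun i => p i < s i) Finset.univ with hS
  have hmem : ∀ j, j ∈ S ↔ p j < s j := by
    intro j; simp [hS]
  -- d = dM componentwise, so: absorbing property of S
  have hdvec : ∀ j, Matrix.vecMul s M j - Matrix.vecMul p M j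
      = ∑ i, (s i - p i) * M i j := by
    intro j
    rw [vecMul_apply', vecMul_apply', ← Finset.sum_sub_distrib]
    exact Finset.sum_congr rfl fun i _ => (sub_mul _ _ _).symm
  have habs : ∀ i ∈ S, ∀ j, j ∉ S → M i j = 0 := by
    intro i hi j hj
    have hj' : s j = p j := le_antisymm (by
      by_contra h
      exact hj ((hmem j).2 (lt_of_le_of_ne (hps j) (fun h' => h (h' ▸ le_rfl))))) (hps j)
    have h0 : ∑ l, (s l - p l) * M l j = 0 := by
      rw [← hdvec j, ← heq j, hj', sub_self]
    have hterm := (Finset.sum_eq_zero_iff_of_nonneg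
      (fun l _ => mul_nonneg (sub_nonneg.2 (hps l)) (hM.1 l j))).1 h0 i (Finset.mem_univ i)
    have hdi : 0 < s i - p i := sub_pos.2 ((hmem i).1 hi)
    rcases mul_eq_zero.mp hterm with h | h
    · exact absurd h (ne_of_gt hdi)
    · exact h
  -- suppose S nonempty, derive contradiction
  have hSempty : S = ∅ := by
    by_contra hne
    obtain ⟨j0, hj0⟩ := Finset.nonempty_of_ne_empty hne
    have hppos : ∀ i, 0 < p i := fix_pos hM hpbar he hca hp0 hfp
    have hrow1 : ∀ i ∈ S, ∑ j ∈ S, M i j = 1 := by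
      intro i hi
      have h2 : ∑ j ∈ Sᶜ, M i j = 0 :=
        Finset.sum_eq_zero fun j hj => habs i hi j (Finset.mem_compl.mp hj)
      have h3 := Finset.sum_add_sum_compl S (M i)
      rw [hM.2 i] at h3
      linarith
    have hbal : ∑ j ∈ S, p j = ∑ j ∈ S, Matrix.vecMul p M j + ∑ j ∈ S, e j := by
      rw [← Finset.sum_add_distrib]
      exact Finset.sum_congr rfl fun j hj => (hdef j ((hmem j).1 hj)).1
    have hvm_split : ∑ j ∈ S, Matrix.vecMul p M j
        = ∑ i ∈ S, p i + ∑ i ∈ Sᶜ, p i * ∑ j ∈ S, M i j := by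
      calc ∑ j ∈ S, Matrix.vecMul p M j = ∑ j ∈ S, ∑ i, p i * M i j :=
            Finset.sum_congr rfl fun j _ => vecMul_apply' p j
        _ = ∑ i, ∑ j ∈ S, p i * M i j := Finset.sum_comm
        _ = ∑ i, p i * ∑ j ∈ S, M i j :=
            Finset.sum_congr rfl fun i _ => (Finset.mul_sum _ _ _).symm
        _ = ∑ i ∈ S, p i * ∑ j ∈ S, M i j + ∑ i ∈ Sᶜ, p i * ∑ j ∈ S, M i j :=
            (Finset.sum_add_sum_compl S _).symm
        _ = ∑ i ∈ S, p i + ∑ i ∈ Sᶜ, p i * ∑ j ∈ S, M i j := by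
            rw [Finset.sum_congr rfl fun i hi => by rw [hrow1 i hi, mul_one]]
    have hzero : ∑ i ∈ Sᶜ, p i * ∑ j ∈ S, M i j + ∑ j ∈ S, e j = 0 := by
      rw [hvm_split] at hbal; linarith
    have hcross_nonneg : ∀ i ∈ Sᶜ, 0 ≤ p i * ∑ j ∈ S, M i j := fun i _ =>
      mul_nonneg (hppos i).le (Finset.sum_nonneg fun j _ => hM.1 i j)
    have he_nonneg : (0:ℝ) ≤ ∑ j ∈ S, e j := Finset.sum_nonneg fun j _ => he j
    have hc_nonneg : (0:ℝ) ≤ ∑ i ∈ Sᶜ, p i * ∑ j ∈ S, M i j :=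
      Finset.sum_nonneg hcross_nonneg
    have hcross0 : ∑ i ∈ Sᶜ, p i * ∑ j ∈ S, M i j = 0 := by linarith
    have heS0 : ∑ j ∈ S, e j = 0 := by linarith
    have he_S : ∀ j ∈ S, e j = 0 :=
      (Finset.sum_eq_zero_iff_of_nonneg (fun j _ => he j)).1 heS0
    have hM2 : ∀ i, i ∉ S → ∀ j ∈ S, M i j = 0 := by
      intro i hi j hj
      have h1 := (Finset.sum_eq_zero_iff_of_nonneg hcross_nonneg).1 hcross0 i
        (Finset.mem_compl.mpr hi)
      have h2 : ∑ j ∈ S, M i j = 0 := by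
        rcases mul_eq_zero.mp h1 with h | h
        · exact absurd h (ne_of_gt (hppos i))
        · exact h
      exact (Finset.sum_eq_zero_iff_of_nonneg (fun j _ => hM.1 i j)).1 h2 j hj
    have hpow : ∀ k : ℕ, ∀ i, i ∉ S → ∀ j ∈ S, (M ^ (k + 1)) i j = 0 := by
      intro k
      induction k with
      | zero => intro i hi j hj; rw [pow_one]; exact hM2 i hi j hj
      | succ k ih =>
        intro i hi j hj
        rw [pow_succ, Matrix.mul_apply]
        refine Finset.sum_eq_zero fun l _ => ?_
        by_cases hl : l ∈ S
        · rw [ih i hi l hl, zero_mul]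
        · rw [hM2 l hl j hj, mul_zero]
    obtain ⟨i, hei, hacc⟩ := hca j0
    have hiS : i ∉ S := fun h => absurd (he_S i h) (ne_of_gt hei)
    rcases hacc with rfl | ⟨k, hk, hkpos⟩
    · exact hiS hj0
    · obtain ⟨m, rfl⟩ := Nat.exists_eq_succ_of_ne_zero hk.ne'
      rw [hpow m i hiS j0 hj0] at hkpos
      exact lt_irrefl 0 hkpos
  funext j
  by_contra h
  have : j ∈ S := (hmem j).2 (lt_of_le_of_ne (hps j) h)
  rw [hSempty] at this
  exact absurd this (Finset.notMem_empty j)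


end helpers

/-- if every node is cash accessible, the system has a unique
clearing vector p*, which is strictly positive, and Φᵏ p → p* for all
p ∈ [0, p̄]. -/
theorem unique_clearing_cash_accessible {n : ℕ} (M : Matrix (Fin n) (Fin n) ℝ)
    (pbar e : Fin n → ℝ) (hM : Markov M) (hpbar : ∀ i, 0 < pbar i)
    (he : 0 ≤ e) (hca : ∀ j, CashAcc M e j) :
    ∃ pstar : Fin n → ℝ,
      (0 ≤ pstar ∧ pstar ≤ pbar ∧ Phi M e pbar pstar = pstar) ∧
      (∀ p, 0 ≤ p → p ≤ pbar → Phi M e pbar p = p → p = pstar) ∧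
      (∀ i, 0 < pstar i) ∧
      (∀ p, 0 ≤ p → p ≤ pbar →
        Tendsto (fun k => (Phi M e pbar)^[k] p) atTop (𝓝 pstar)) := by
  classical
  set F := Phi M e pbar with hF
  have hpbar0 : (0 : Fin n → ℝ) ≤ pbar := fun i => (hpbar i).le
  -- iterates stay in the box
  have hbox : ∀ (p : Fin n → ℝ), 0 ≤ p → p ≤ pbar →
      ∀ k, 0 ≤ F^[k] p ∧ F^[k] p ≤ pbar := by
    intro p hp0 hpb k
    induction k with
    | zero => simpa using ⟨hp0, hpb⟩
    | succ k ih =>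
      rw [Function.iterate_succ_apply']
      exact ⟨phi_nonneg hM he hpbar ih.1, phi_le_pbar _⟩
  have hmono_iter : ∀ {p q : Fin n → ℝ}, p ≤ q → ∀ k, F^[k] p ≤ F^[k] q := by
    intro p q h k
    induction k with
    | zero => simpa using h
    | succ k ih =>
      rw [Function.iterate_succ_apply', Function.iterate_succ_apply']
      exact phi_mono hM ih
  -- the decreasing sequence from pbar
  have hanti : ∀ k, F^[k + 1] pbar ≤ F^[k] pbar := by
    intro k
    rw [Function.iterate_succ_apply]
    exact hmono_iter (phi_le_pbar pbar) k
  set pstar : Fin n → ℝ := fun j => ⨅ k, F^[k] pbar j with hpstar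
  have hbdd : ∀ j, BddBelow (Set.range fun k => F^[k] pbar j) := by
    intro j
    refine ⟨0, ?_⟩
    rintro x ⟨k, rfl⟩
    exact (hbox pbar hpbar0 le_rfl k).1 j
  have htend : Tendsto (fun k => F^[k] pbar) atTop (𝓝 pstar) := by
    rw [tendsto_pi_nhds]
    intro j
    exact tendsto_atTop_ciInf
      (antitone_nat_of_succ_le fun k => hanti k j) (hbdd j)
  have hfixstar : F pstar = pstar := by
    have h1 : Tendsto (fun k => F^[k + 1] pbar) atTop (𝓝 pstar) :=
      htend.comp (tendsto_add_atTop_nat 1)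
    have h2 : Tendsto (fun k => F (F^[k] pbar)) atTop (𝓝 (F pstar)) :=
      (phi_cont.tendsto pstar).comp htend
    simp only [← Function.iterate_succ_apply'] at h2
    exact tendsto_nhds_unique h2 h1
  have hstar0 : 0 ≤ pstar := by
    intro j
    exact le_ciInf fun k => (hbox pbar hpbar0 le_rfl k).1 j
  have hstarb : pstar ≤ pbar := by
    intro j
    have := ciInf_le (hbdd j) 0
    simpa using this
  -- every fixed point lies below pstar, hence equals it
  have huniq : ∀ p, 0 ≤ p → p ≤ pbar → Phi M e pbar p = p → p = pstar := by
    intro p hp0 hpb hfix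
    have hle : p ≤ pstar := by
      intro j
      refine le_ciInf fun k => ?_
      have h1 : F^[k] p = p := Function.iterate_fixed hfix k
      have := hmono_iter hpb k
      rw [h1] at this
      exact this j
    exact fix_unique_le hM hpbar he hca hp0 hle hstarb hfix hfixstar
  refine ⟨pstar, ⟨hstar0, hstarb, hfixstar⟩, huniq,
    fix_pos hM hpbar he hca hstar0 hfixstar, ?_⟩
  -- convergence from any point: squeeze between iterates from 0 and pbar
  have hmono0 : ∀ k, F^[k] (0 : Fin n → ℝ) ≤ F^[k + 1] 0 := by
    intro k
    rw [Function.iterate_succ_apply]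
    exact hmono_iter (phi_nonneg hM he hpbar (le_refl (0 : Fin n → ℝ))) k
  set pmin : Fin n → ℝ := fun j => ⨆ k, F^[k] 0 j with hpmin
  have hbdd0 : ∀ j, BddAbove (Set.range fun k => F^[k] (0 : Fin n → ℝ) j) := by
    intro j
    refine ⟨pbar j, ?_⟩
    rintro x ⟨k, rfl⟩
    exact (hbox 0 le_rfl hpbar0 k).2 j
  have htend0 : Tendsto (fun k => F^[k] (0 : Fin n → ℝ)) atTop (𝓝 pmin) := by
    rw [tendsto_pi_nhds]
    intro j
    exact tendsto_atTop_ciSup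
      (monotone_nat_of_le_succ fun k => hmono0 k j) (hbdd0 j)
  have hfixmin : F pmin = pmin := by
    have h1 : Tendsto (fun k => F^[k + 1] (0 : Fin n → ℝ)) atTop (𝓝 pmin) :=
      htend0.comp (tendsto_add_atTop_nat 1)
    have h2 : Tendsto (fun k => F (F^[k] (0 : Fin n → ℝ))) atTop (𝓝 (F pmin)) :=
      (phi_cont.tendsto pmin).comp htend0
    simp only [← Function.iterate_succ_apply'] at h2
    exact tendsto_nhds_unique h2 h1
  have hmin0 : 0 ≤ pmin := by
    intro j
    have := le_ciSup (hbdd0 j) 0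
    simpa using this
  have hminb : pmin ≤ pbar := by
    intro j
    exact ciSup_le fun k => (hbox 0 le_rfl hpbar0 k).2 j
  have hmin_eq : pmin = pstar := huniq pmin hmin0 hminb hfixmin
  intro p hp0 hpb
  rw [tendsto_pi_nhds]
  intro j
  have hlow : ∀ k, F^[k] 0 j ≤ F^[k] p j := fun k => hmono_iter hp0 k j
  have hup : ∀ k, F^[k] p j ≤ F^[k] pbar j := fun k => hmono_iter hpb k j
  have ht0 : Tendsto (fun k => F^[k] (0 : Fin n → ℝ) j) atTop (𝓝 (pstar j)) := by
    have := (tendsto_pi_nhds.mp htend0) j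
    rwa [hmin_eq] at this
  have ht1 : Tendsto (fun k => F^[k] pbar j) atTop (𝓝 (pstar j)) :=
    (tendsto_pi_nhds.mp htend) j
  exact tendsto_of_tendsto_of_tendsto_of_le_of_le ht0 ht1 hlow hup
end

section
/- Let Π be a Markov matrix on I, P ⊂ I an absorbing set, and A ⊂ Pᶜ the set of nodes from which P is accessible. Then for all i, j ∈ A, Πᵏ(i,j) → 0 as k → ∞. -/
open Filter Topology

lemma pow_entry_nonneg {n : ℕ} {M : Matrix (Fin n) (Fin n) ℝ} (hM : Markov M) :
    ∀ k i j, 0 ≤ (M ^ k) i j := by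
  intro k
  induction k with
  | zero => intro i j; rw [pow_zero, Matrix.one_apply]; split <;> norm_num
  | succ k ih =>
    intro i j
    rw [pow_succ, Matrix.mul_apply]
    exact Finset.sum_nonneg fun m _ => mul_nonneg (ih i m) (hM.1 m j)

lemma pow_row_sum {n : ℕ} {M : Matrix (Fin n) (Fin n) ℝ} (hM : Markov M) :
    ∀ k i, ∑ j, (M ^ k) i j = 1 := by
  intro k
  induction k with
  | zero => intro i; simp [Matrix.one_apply]
  | succ k ih =>
    intro i
    simp only [pow_succ', Matrix.mul_apply]
    rw [Finset.sum_comm]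
    have : ∀ m, ∑ j, M i m * (M ^ k) m j = M i m := by
      intro m; rw [← Finset.mul_sum, ih m, mul_one]
    simp_rw [this]
    exact hM.2 i

lemma pow_pos_trans {n : ℕ} {M : Matrix (Fin n) (Fin n) ℝ} (hM : Markov M)
    {a b c : Fin n} {k l : ℕ} (h1 : 0 < (M ^ k) a b) (h2 : 0 < (M ^ l) b c) :
    0 < (M ^ (k + l)) a c := by
  rw [pow_add, Matrix.mul_apply]
  refine lt_of_lt_of_le (mul_pos h1 h2) ?_
  exact Finset.single_le_sum
    (f := fun m => (M ^ k) a m * (M ^ l) m c)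
    (fun m _ => mul_nonneg (pow_entry_nonneg hM k a m) (pow_entry_nonneg hM l m c))
    (Finset.mem_univ b)

lemma access_trans {n : ℕ} {M : Matrix (Fin n) (Fin n) ℝ} (hM : Markov M)
    {a b c : Fin n} (hab : Access M a b) (hbc : Access M b c) : Access M a c := by
  rcases hab with rfl | ⟨k, hk, hkpos⟩
  · exact hbc
  · rcases hbc with rfl | ⟨l, hl, hlpos⟩
    · exact Or.inr ⟨k, hk, hkpos⟩
    · exact Or.inr ⟨k + l, by omega, pow_pos_trans hM hkpos hlpos⟩

/-- if P is absorbing and A is the set of nodes outside P from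
which P is accessible, then Πᵏ(i,j) → 0 for all i, j ∈ A. -/
theorem power_entries_vanish_on_A {n : ℕ} (M : Matrix (Fin n) (Fin n) ℝ)
    (hM : Markov M) (P : Set (Fin n))
    (habs : ∀ i ∈ P, ∀ j, j ∉ P → ¬ Access M i j)
    (i j : Fin n)
    (hi : i ∉ P ∧ ∃ p ∈ P, Access M i p)
    (hj : j ∉ P ∧ ∃ p ∈ P, Access M j p) :
    Tendsto (fun k => (M ^ k) i j) atTop (𝓝 0) := by
  classical
  set A : Finset (Fin n) :=
    Finset.univ.filter (fun x => x ∉ P ∧ ∃ p ∈ P, Access M x p) with hAdef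
  have memA : ∀ x, x ∈ A ↔ (x ∉ P ∧ ∃ p ∈ P, Access M x p) := by
    intro x; simp [hAdef]
  have hiA : i ∈ A := (memA i).2 hi
  have hjA : j ∈ A := (memA j).2 hj
  have hA : A.Nonempty := ⟨i, hiA⟩
  -- nodes outside A have zero transition into A
  have zeroRow : ∀ m, m ∉ A → ∀ j' ∈ A, ∀ l, (M ^ l) m j' = 0 := by
    intro m hm j' hj' l
    have hj'A := (memA j').1 hj'
    by_contra hne
    have hpos : 0 < (M ^ l) m j' :=
      lt_of_le_of_ne (pow_entry_nonneg hM l m j') (Ne.symm hne)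
    rcases Nat.eq_zero_or_pos l with rfl | hl
    · rw [pow_zero, Matrix.one_apply] at hpos
      split at hpos
      · next h => exact hm (h ▸ hj')
      · exact lt_irrefl 0 hpos
    · have hacc : Access M m j' := Or.inr ⟨l, hl, hpos⟩
      have hm' : ¬(m ∉ P ∧ ∃ p ∈ P, Access M m p) := fun h => hm ((memA m).2 h)
      by_cases hmp : m ∈ P
      · exact habs m hmp j' hj'A.1 hacc
      · obtain ⟨p, hp, hjp⟩ := hj'A.2
        exact hm' ⟨hmp, p, hp, access_trans hM hacc hjp⟩
  set F : ℕ → Fin n → ℝ := fun k a => ∑ j' ∈ A, (M ^ k) a j' with hFdef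
  have F_nonneg : ∀ k a, 0 ≤ F k a := fun k a =>
    Finset.sum_nonneg fun m _ => pow_entry_nonneg hM k a m
  have F_le_one : ∀ k a, F k a ≤ 1 := by
    intro k a
    calc F k a ≤ ∑ j', (M ^ k) a j' :=
          Finset.sum_le_sum_of_subset_of_nonneg (Finset.subset_univ A)
            (fun m _ _ => pow_entry_nonneg hM k a m)
      _ = 1 := pow_row_sum hM k a
  have F_rec : ∀ k l a, F (k + l) a = ∑ m ∈ A, (M ^ k) a m * F l m := by
    intro k l a
    have h1 : F (k + l) a = ∑ m, (M ^ k) a m * F l m := by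
      simp only [hFdef, pow_add, Matrix.mul_apply]
      rw [Finset.sum_comm]
      simp [Finset.mul_sum]
    rw [h1]
    refine (Finset.sum_subset (Finset.subset_univ A) ?_).symm
    intro m _ hm
    have : F l m = 0 := Finset.sum_eq_zero fun j' hj' => zeroRow m hm j' hj' l
    rw [this, mul_zero]
  set G : ℕ → ℝ := fun k => A.sup' hA (F k) with hGdef
  have F_le_G : ∀ k, ∀ a ∈ A, F k a ≤ G k := fun k a ha => Finset.le_sup' (F k) ha
  have G_nonneg : ∀ k, 0 ≤ G k := fun k => le_trans (F_nonneg k i) (F_le_G k i hiA)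
  have G_le_one : ∀ k, G k ≤ 1 := fun k => Finset.sup'_le hA _ fun a _ => F_le_one k a
  have F_bound : ∀ k l a, F (k + l) a ≤ F k a * G l := by
    intro k l a
    rw [F_rec]
    calc ∑ m ∈ A, (M ^ k) a m * F l m
        ≤ ∑ m ∈ A, (M ^ k) a m * G l :=
          Finset.sum_le_sum fun m hm =>
            mul_le_mul_of_nonneg_left (F_le_G l m hm) (pow_entry_nonneg hM k a m)
      _ = F k a * G l := by rw [← Finset.sum_mul]
  have F_anti : ∀ k l a, F (k + l) a ≤ F k a := fun k l a =>
    le_trans (F_bound k l a) (by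
      nlinarith [G_le_one l, G_nonneg l, F_nonneg k a])
  have G_submul : ∀ k l, G (k + l) ≤ G k * G l := by
    intro k l
    refine Finset.sup'_le hA _ fun a ha => ?_
    exact le_trans (F_bound k l a)
      (mul_le_mul_of_nonneg_right (F_le_G k a ha) (G_nonneg l))
  have G_anti : ∀ k l, G (k + l) ≤ G k := fun k l =>
    le_trans (G_submul k l) (by nlinarith [G_le_one l, G_nonneg l, G_nonneg k])
  -- eventually each F · a < 1
  have hev : ∀ a ∈ A, ∀ᶠ k in atTop, F k a < 1 := by
    intro a ha
    obtain ⟨haP, p, hp, hap⟩ := (memA a).1 ha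
    have hpa : p ≠ a := fun h => haP (h ▸ hp)
    obtain ⟨k0, hk0, hpos⟩ : ∃ k : ℕ, 0 < k ∧ 0 < (M ^ k) a p := by
      rcases hap with h | h
      · exact absurd h hpa
      · exact h
    have hpA : p ∉ A := fun h => (((memA p).1 h).1) hp
    have hF0 : F k0 a < 1 := by
      have hins : (M ^ k0) a p + F k0 a = ∑ j' ∈ insert p A, (M ^ k0) a j' := by
        rw [Finset.sum_insert hpA]
      have hle : ∑ j' ∈ insert p A, (M ^ k0) a j' ≤ 1 := by
        calc ∑ j' ∈ insert p A, (M ^ k0) a j' ≤ ∑ j', (M ^ k0) a j' :=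
              Finset.sum_le_sum_of_subset_of_nonneg (Finset.subset_univ _)
                (fun m _ _ => pow_entry_nonneg hM k0 a m)
          _ = 1 := pow_row_sum hM k0 a
      linarith [hins ▸ hle]
    filter_upwards [eventually_ge_atTop k0] with k hk
    have : k0 + (k - k0) = k := by omega
    calc F k a = F (k0 + (k - k0)) a := by rw [this]
      _ ≤ F k0 a := F_anti k0 (k - k0) a
      _ < 1 := hF0
  have hev' : ∀ᶠ k in atTop, (∀ a ∈ A, F k a < 1) ∧ 1 ≤ k :=
    ((Filter.eventually_all_finset A).2 hev).and (eventually_ge_atTop 1)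
  obtain ⟨K, hKF, hK1⟩ := hev'.exists
  have hKpos : 0 < K := hK1
  set c : ℝ := G K with hcdef
  have hc1 : c < 1 := (Finset.sup'_lt_iff hA).2 hKF
  have hc0 : 0 ≤ c := G_nonneg K
  have G_pow : ∀ m, G (m * K) ≤ c ^ m := by
    intro m
    induction m with
    | zero => simpa using G_le_one 0
    | succ m ih =>
      calc G ((m + 1) * K) = G (m * K + K) := by ring_nf
        _ ≤ G (m * K) * G K := G_submul (m * K) K
        _ ≤ c ^ m * c := mul_le_mul_of_nonneg_right ih hc0
        _ = c ^ (m + 1) := by ring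
  have G_le : ∀ k, G k ≤ c ^ (k / K) := by
    intro k
    have hdm : k / K * K + k % K = k := Nat.div_add_mod' k K
    calc G k = G (k / K * K + k % K) := by rw [hdm]
      _ ≤ G (k / K * K) := G_anti _ _
      _ ≤ c ^ (k / K) := G_pow _
  have hdiv : Tendsto (fun k : ℕ => k / K) atTop atTop := by
    refine tendsto_atTop_atTop.2 fun b => ⟨b * K, fun k hk => ?_⟩
    exact (Nat.le_div_iff_mul_le hKpos).2 hk
  have htend : Tendsto (fun k : ℕ => c ^ (k / K)) atTop (𝓝 0) :=
    (tendsto_pow_atTop_nhds_zero_of_lt_one hc0 hc1).comp hdiv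
  refine squeeze_zero (fun k => pow_entry_nonneg hM k i j) (fun k => ?_) htend
  calc (M ^ k) i j ≤ F k i :=
        Finset.single_le_sum (fun m _ => pow_entry_nonneg hM k i m) hjA
    _ ≤ G k := F_le_G k i hiA
    _ ≤ c ^ (k / K) := G_le k
end

section
/- Every financial system (I, Π, p̄, e), with Π a Markov matrix, p̄ ≫ 0 and e ≥ 0, has exactly one clearing vector, under the convention that p(j) = 0 is required for every node j that is not cash accessible. -/
namespace UCV
open Relation

variable {n : ℕ}

def Step (M : Matrix (Fin n) (Fin n) ℝ) (i j : Fin n) : Prop := 0 < M i j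

lemma pow_nonneg' {M : Matrix (Fin n) (Fin n) ℝ} (hM : ∀ i j, 0 ≤ M i j) :
    ∀ k i j, 0 ≤ (M ^ k) i j := by
  intro k
  induction k with
  | zero => intro i j; simp [Matrix.one_apply]; split <;> norm_num
  | succ k ih =>
    intro i j
    rw [pow_succ, Matrix.mul_apply]
    exact Finset.sum_nonneg fun l _ => mul_nonneg (ih i l) (hM l j)

lemma pow_pos_rtg {M : Matrix (Fin n) (Fin n) ℝ} (hM : ∀ i j, 0 ≤ M i j) :
    ∀ k i j, 0 < (M ^ k) i j → ReflTransGen (Step M) i j := by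
  intro k
  induction k with
  | zero =>
    intro i j h
    rw [pow_zero, Matrix.one_apply] at h
    split at h
    · exact (by simp_all : i = j) ▸ ReflTransGen.refl
    · exact absurd h (by norm_num)
  | succ k ih =>
    intro i j h
    rw [pow_succ, Matrix.mul_apply] at h
    have : ∃ l ∈ Finset.univ, (0:ℝ) < (M ^ k) i l * M l j := by
      by_contra hc
      push_neg at hc
      have : ∑ l, (M ^ k) i l * M l j ≤ 0 :=
        Finset.sum_nonpos fun l hl => hc l hl
      linarith
    obtain ⟨l, _, hl⟩ := this
    have h1 : 0 < (M ^ k) i l := by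
      rcases lt_or_ge 0 ((M ^ k) i l) with h' | h'
      · exact h'
      · nlinarith [hM l j]
    have h2 : 0 < M l j := by nlinarith [pow_nonneg' hM k i l]
    exact (ih i l h1).tail h2

lemma rtg_access {M : Matrix (Fin n) (Fin n) ℝ} (hM : ∀ i j, 0 ≤ M i j)
    {i j : Fin n} (h : ReflTransGen (Step M) i j) : Access M i j := by
  induction h with
  | refl => exact Or.inl rfl
  | tail hab hbc ih =>
    rename_i b c
    right
    rcases ih with rfl | ⟨k, hk, hpos⟩
    · exact ⟨1, one_pos, by rwa [pow_one]⟩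
    · refine ⟨k + 1, Nat.succ_pos k, ?_⟩
      rw [pow_succ, Matrix.mul_apply]
      have : (M ^ k) i b * M b c ≤ ∑ l, (M ^ k) i l * M l c :=
        Finset.single_le_sum
          (fun l _ => mul_nonneg (pow_nonneg' hM k i l) (hM l c))
          (Finset.mem_univ b)
      have hbc' : 0 < M b c := hbc
      nlinarith [mul_pos hpos hbc']
  
lemma access_rtg {M : Matrix (Fin n) (Fin n) ℝ} (hM : ∀ i j, 0 ≤ M i j)
    {i j : Fin n} (h : Access M i j) : ReflTransGen (Step M) i j := by
  rcases h with rfl | ⟨k, _, hpos⟩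
  · exact ReflTransGen.refl
  · exact pow_pos_rtg hM k i j hpos

lemma cashAcc_iff {M : Matrix (Fin n) (Fin n) ℝ} (hM : ∀ i j, 0 ≤ M i j)
    (e : Fin n → ℝ) (j : Fin n) :
    CashAcc M e j ↔ ∃ i, 0 < e i ∧ ReflTransGen (Step M) i j :=
  ⟨fun ⟨i, hi, ha⟩ => ⟨i, hi, access_rtg hM ha⟩,
   fun ⟨i, hi, ha⟩ => ⟨i, hi, rtg_access hM ha⟩⟩

lemma cashAcc_step {M : Matrix (Fin n) (Fin n) ℝ} (hM : ∀ i j, 0 ≤ M i j)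
    {e : Fin n → ℝ} {i j : Fin n} (h : CashAcc M e i) (hs : Step M i j) :
    CashAcc M e j := by
  rw [cashAcc_iff hM] at *
  obtain ⟨i0, h0, hr⟩ := h
  exact ⟨i0, h0, hr.tail hs⟩

lemma cashAcc_of_pos {M : Matrix (Fin n) (Fin n) ℝ} {e : Fin n → ℝ} {j : Fin n}
    (h : 0 < e j) : CashAcc M e j := ⟨j, h, Or.inl rfl⟩


lemma vecMul_apply' {M : Matrix (Fin n) (Fin n) ℝ} (p : Fin n → ℝ) (j : Fin n) :
    Matrix.vecMul p M j = ∑ i, p i * M i j := rfl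

lemma vecMul_nonneg' {M : Matrix (Fin n) (Fin n) ℝ} (hM : ∀ i j, 0 ≤ M i j)
    {p : Fin n → ℝ} (hp : 0 ≤ p) (j : Fin n) : 0 ≤ Matrix.vecMul p M j := by
  rw [vecMul_apply']
  exact Finset.sum_nonneg fun i _ => mul_nonneg (hp i) (hM i j)

lemma vecMul_mono' {M : Matrix (Fin n) (Fin n) ℝ} (hM : ∀ i j, 0 ≤ M i j)
    {p q : Fin n → ℝ} (h : p ≤ q) (j : Fin n) :
    Matrix.vecMul p M j ≤ Matrix.vecMul q M j := by
  rw [vecMul_apply', vecMul_apply']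
  exact Finset.sum_le_sum fun i _ => mul_le_mul_of_nonneg_right (h i) (hM i j)

lemma Phi_mono {M : Matrix (Fin n) (Fin n) ℝ} (hM : ∀ i j, 0 ≤ M i j)
    (e pbar : Fin n → ℝ) {p q : Fin n → ℝ} (h : p ≤ q) :
    Phi M e pbar p ≤ Phi M e pbar q := by
  intro j
  exact min_le_min (by linarith [vecMul_mono' hM h j]) le_rfl

lemma Phi_nonneg {M : Matrix (Fin n) (Fin n) ℝ} (hM : ∀ i j, 0 ≤ M i j)
    {e pbar : Fin n → ℝ} (he : 0 ≤ e) (hpbar : 0 ≤ pbar)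
    {p : Fin n → ℝ} (hp : 0 ≤ p) : 0 ≤ Phi M e pbar p := by
  intro j
  exact le_min (by linarith [vecMul_nonneg' hM hp j, he j]) (hpbar j)

lemma Phi_le_pbar {M : Matrix (Fin n) (Fin n) ℝ} (e pbar p : Fin n → ℝ) :
    Phi M e pbar p ≤ pbar := fun j => min_le_right _ _

/-- least fixed point of `Phi` on `[0, pbar]`. -/
lemma exists_lfp {M : Matrix (Fin n) (Fin n) ℝ} {e pbar : Fin n → ℝ}
    (hM : ∀ i j, 0 ≤ M i j) (hpbar : (0 : Fin n → ℝ) ≤ pbar) (he : 0 ≤ e) :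
    ∃ L : Fin n → ℝ, 0 ≤ L ∧ L ≤ pbar ∧ Phi M e pbar L = L ∧
      ∀ q, 0 ≤ q → q ≤ pbar → Phi M e pbar q ≤ q → L ≤ q := by
  haveI : Fact ((0 : Fin n → ℝ) ≤ pbar) := ⟨hpbar⟩
  let f : Set.Icc (0 : Fin n → ℝ) pbar →o Set.Icc (0 : Fin n → ℝ) pbar :=
    ⟨fun p => ⟨Phi M e pbar p.1,
        ⟨Phi_nonneg hM he hpbar p.2.1, Phi_le_pbar _ _ _⟩⟩,
      fun p q h => Phi_mono hM e pbar h⟩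
  let L := OrderHom.lfp f
  refine ⟨L.1, L.2.1, L.2.2, ?_, ?_⟩
  · exact congrArg Subtype.val (OrderHom.map_lfp f)
  · intro q hq0 hqle hΦq
    exact OrderHom.lfp_le f (a := ⟨q, hq0, hqle⟩) hΦq

/-- along a positive path from a cash node, any nonnegative fixed point is
positive. -/
lemma fixed_pos {M : Matrix (Fin n) (Fin n) ℝ} {e pbar : Fin n → ℝ}
    (hM : ∀ i j, 0 ≤ M i j) (hpbar : ∀ i, 0 < pbar i) (he : 0 ≤ e)
    {p : Fin n → ℝ} (hp : 0 ≤ p) (hfix : Phi M e pbar p = p)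
    {i x : Fin n} (hrtg : Relation.ReflTransGen (Step M) i x) (hei : 0 < e i) :
    0 < p x := by
  induction hrtg with
  | refl =>
    have h := congrFun hfix i
    have h0 := vecMul_nonneg' hM hp i
    simp only [Phi] at h
    rw [← h]
    exact lt_min (by linarith) (hpbar i)
  | tail hab hbc ih =>
    rename_i b c
    have hb : 0 < p b := ih
    have hbc' : 0 < M b c := hbc
    have h := congrFun hfix c
    simp only [Phi] at h
    rw [← h]
    have : p b * M b c ≤ Matrix.vecMul p M c := by
      rw [vecMul_apply']
      exact Finset.single_le_sum (fun l _ => mul_nonneg (hp l) (hM l c))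
        (Finset.mem_univ b)
    have := mul_pos hb hbc'
    have hec : (0:ℝ) ≤ e c := he c
    exact lt_min (by linarith) (hpbar c)

/-- last exit: a path from outside `T` into `T` crosses the boundary. -/
lemma crossing {M : Matrix (Fin n) (Fin n) ℝ} {T : Finset (Fin n)}
    {a j : Fin n} (h : Relation.ReflTransGen (Step M) a j) (ha : a ∉ T) :
    j ∈ T → ∃ x y, Relation.ReflTransGen (Step M) a x ∧ x ∉ T ∧ y ∈ T ∧
      Step M x y := by
  induction h with
  | refl => exact fun hj => absurd hj ha
  | tail hab hbc ih =>
    rename_i b c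
    intro hc
    by_cases hb : b ∈ T
    · exact ih hb
    · exact ⟨b, c, hab, hb, hc, hbc⟩

end UCV

/-- main theorem: every financial system has exactly one
clearing vector, under the convention that payments vanish at nodes that are
not cash accessible. -/
theorem unique_clearing_vector {n : ℕ} (M : Matrix (Fin n) (Fin n) ℝ)
    (pbar e : Fin n → ℝ) (hM : Markov M) (hpbar : ∀ i, 0 < pbar i)
    (he : 0 ≤ e) :
    ∃! p : Fin n → ℝ,
      0 ≤ p ∧ p ≤ pbar ∧ Phi M e pbar p = p ∧
        ∀ j, ¬ CashAcc M e j → p j = 0 := by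
  classical
  obtain ⟨hM0, hM1⟩ := hM
  have hpbar0 : (0 : Fin n → ℝ) ≤ pbar := fun i => (hpbar i).le
  obtain ⟨L, hL0, hLle, hLfix, hLmin⟩ := UCV.exists_lfp hM0 hpbar0 he
  -- the least fixed point vanishes off the cash-accessible set
  have hLconv : ∀ j, ¬ CashAcc M e j → L j = 0 := by
    set r : Fin n → ℝ := fun j => if CashAcc M e j then L j else 0 with hr
    have hrL : r ≤ L := by
      intro j; by_cases hj : CashAcc M e j <;> simp only [hr, hj, if_true, if_false, le_refl]
      exact hL0 j
    have hr0 : (0 : Fin n → ℝ) ≤ r := by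
      intro j
      show (0:ℝ) ≤ r j
      by_cases hj : CashAcc M e j
      · simpa [hr, hj] using hL0 j
      · simp [hr, hj]
    have hrle : r ≤ pbar := le_trans hrL hLle
    have hΦr : Phi M e pbar r ≤ r := by
      intro j
      by_cases hj : CashAcc M e j
      · have hrj : r j = L j := by simp [hr, hj]
        have h1 : Phi M e pbar r j ≤ Phi M e pbar L j :=
          UCV.Phi_mono hM0 e pbar hrL j
        have h2 : Phi M e pbar L j = L j := congrFun hLfix j
        rw [hrj]; linarith
      · have hrj : r j = 0 := by simp [hr, hj]
        have hej : e j = 0 := by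
          by_contra hne
          exact hj (UCV.cashAcc_of_pos (M := M) (lt_of_le_of_ne (he j) (Ne.symm hne)))
        have hv : Matrix.vecMul r M j = 0 := by
          rw [UCV.vecMul_apply']
          apply Finset.sum_eq_zero
          intro i _
          by_cases hi : CashAcc M e i
          · have hMij : M i j = 0 := by
              by_contra hne
              exact hj (UCV.cashAcc_step hM0 hi
                (lt_of_le_of_ne (hM0 i j) (Ne.symm hne)))
            simp [hMij]
          · have : r i = 0 := by simp [hr, hi]
            simp [this]
        have hPhi : Phi M e pbar r j
            = min (Matrix.vecMul r M j + e j) (pbar j) := rfl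
        rw [hPhi, hv, hej, hrj]
        simpa using min_le_left (0:ℝ) (pbar j)
    intro j hj
    have h1 : L j ≤ r j := hLmin r hr0 hrle hΦr j
    have h2 : r j = 0 := by simp [hr, hj]
    exact le_antisymm (by rw [h2] at h1; exact h1) (hL0 j)
  -- any clearing vector with the convention equals L
  have core : ∀ p, 0 ≤ p → p ≤ pbar → Phi M e pbar p = p →
      (∀ j, ¬ CashAcc M e j → p j = 0) → p = L := by
    intro p hp0 hple hpfix hpconv
    have hLp : L ≤ p := hLmin p hp0 hple (le_of_eq hpfix)
    set δ : Fin n → ℝ := fun j => p j - L j with hδdef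
    have hδL : δ = p - L := by funext j; simp [hδdef]
    have hδ0 : ∀ j, 0 ≤ δ j := fun j => sub_nonneg.2 (hLp j)
    have hvδ : ∀ j, Matrix.vecMul δ M j
        = Matrix.vecMul p M j - Matrix.vecMul L M j := by
      intro j; rw [hδL, Matrix.sub_vecMul]; rfl
    have hδle : ∀ j, δ j ≤ Matrix.vecMul δ M j := by
      intro j
      have hpj := congrFun hpfix j
      have hLj := congrFun hLfix j
      simp only [Phi] at hpj hLj
      have hBA : Matrix.vecMul L M j ≤ Matrix.vecMul p M j :=
        UCV.vecMul_mono' hM0 hLp j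
      rw [hvδ j]
      show p j - L j ≤ _
      rw [← hpj, ← hLj]
      rcases le_total (Matrix.vecMul L M j + e j) (pbar j) with h | h
      · rw [min_eq_left h]
        have := min_le_left (Matrix.vecMul p M j + e j) (pbar j)
        linarith
      · rw [min_eq_right h]
        have := min_le_right (Matrix.vecMul p M j + e j) (pbar j)
        linarith
    have hsum : ∑ j, Matrix.vecMul δ M j = ∑ j, δ j := by
      simp only [UCV.vecMul_apply']
      rw [Finset.sum_comm]
      simp only [← Finset.mul_sum, hM1, mul_one]
    have hδeq : ∀ j, Matrix.vecMul δ M j = δ j := by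
      have h := (Finset.sum_eq_sum_iff_of_le (s := Finset.univ)
        (f := fun j => δ j) (g := fun j => Matrix.vecMul δ M j)
        (fun j _ => hδle j)).1 hsum.symm
      exact fun j => (h j (Finset.mem_univ j)).symm
    set T : Finset (Fin n) := Finset.univ.filter (fun j => 0 < δ j) with hT
    have hTmem : ∀ j, j ∈ T ↔ 0 < δ j := fun j => by simp [hT]
    have hTclosed : ∀ i ∈ T, ∀ j, 0 < M i j → j ∈ T := by
      intro i hi j hij
      rw [hTmem, ← hδeq j, UCV.vecMul_apply']
      have h1 : δ i * M i j ≤ ∑ l, δ l * M l j :=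
        Finset.single_le_sum (fun l _ => mul_nonneg (hδ0 l) (hM0 l j))
          (Finset.mem_univ i)
      have h2 : 0 < δ i := (hTmem i).1 hi
      nlinarith
    rcases Finset.eq_empty_or_nonempty T with hTE | ⟨j0, hj0⟩
    · funext j
      have hz : δ j = 0 := by
        by_contra hne
        have h1 : 0 < δ j := lt_of_le_of_ne (hδ0 j) (Ne.symm hne)
        have h2 : j ∈ T := (hTmem j).2 h1
        simp [hTE] at h2
      have : p j - L j = 0 := hz
      linarith
    · exfalso
      have hrow : ∀ i ∈ T, ∑ j ∈ T, M i j = 1 := by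
        intro i hi
        rw [← hM1 i]
        exact Finset.sum_subset (Finset.subset_univ T)
          (fun j _ hj => by
            by_contra hne
            exact hj (hTclosed i hi j (lt_of_le_of_ne (hM0 i j) (Ne.symm hne))))
      have hLeq : ∀ j ∈ T, L j = Matrix.vecMul L M j + e j := by
        intro j hj
        have hδj : 0 < p j - L j := (hTmem j).1 hj
        have hLlt : L j < pbar j := by have := hple j; linarith
        have hLj := congrFun hLfix j
        simp only [Phi] at hLj
        rcases le_total (Matrix.vecMul L M j + e j) (pbar j) with h | h
        · rw [min_eq_left h] at hLj; exact hLj.symm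
        · rw [min_eq_right h] at hLj; rw [← hLj] at hLlt
          exact absurd hLlt (lt_irrefl _)
      have hsplit : ∑ j ∈ T, Matrix.vecMul L M j
          = ∑ i ∈ T, L i + ∑ i ∈ Tᶜ, L i * ∑ j ∈ T, M i j := by
        calc ∑ j ∈ T, Matrix.vecMul L M j
            = ∑ j ∈ T, ∑ i, L i * M i j := by simp only [UCV.vecMul_apply']
          _ = ∑ i, ∑ j ∈ T, L i * M i j := Finset.sum_comm
          _ = ∑ i, L i * ∑ j ∈ T, M i j := by simp only [Finset.mul_sum]
          _ = ∑ i ∈ T, L i * ∑ j ∈ T, M i j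
              + ∑ i ∈ Tᶜ, L i * ∑ j ∈ T, M i j :=
              (Finset.sum_add_sum_compl T _).symm
          _ = ∑ i ∈ T, L i + ∑ i ∈ Tᶜ, L i * ∑ j ∈ T, M i j := by
              congr 1
              exact Finset.sum_congr rfl fun i hi => by rw [hrow i hi, mul_one]
      have hbal : ∑ j ∈ T, L j
          = ∑ j ∈ T, Matrix.vecMul L M j + ∑ j ∈ T, e j := by
        rw [← Finset.sum_add_distrib]
        exact Finset.sum_congr rfl hLeq
      have hzero : ∑ i ∈ Tᶜ, L i * ∑ j ∈ T, M i j + ∑ j ∈ T, e j = 0 := by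
        rw [hsplit] at hbal; linarith
      have hnn1 : (0:ℝ) ≤ ∑ i ∈ Tᶜ, L i * ∑ j ∈ T, M i j :=
        Finset.sum_nonneg fun i _ =>
          mul_nonneg (hL0 i) (Finset.sum_nonneg fun j _ => hM0 i j)
      have hnn2 : (0:ℝ) ≤ ∑ j ∈ T, e j := Finset.sum_nonneg fun j _ => he j
      have hc1 : ∀ i ∈ Tᶜ, L i * ∑ j ∈ T, M i j = 0 := by
        have h1 : ∑ i ∈ Tᶜ, L i * ∑ j ∈ T, M i j = 0 := by linarith
        exact fun i hi => (Finset.sum_eq_zero_iff_of_nonneg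
          (fun i _ => mul_nonneg (hL0 i)
            (Finset.sum_nonneg fun j _ => hM0 i j))).1 h1 i hi
      have hc2 : ∀ j ∈ T, e j = 0 := by
        have h2 : ∑ j ∈ T, e j = 0 := by linarith
        exact fun j hj =>
          (Finset.sum_eq_zero_iff_of_nonneg (fun j _ => he j)).1 h2 j hj
      have hCj0 : CashAcc M e j0 := by
        by_contra hnc
        have h1 : p j0 = 0 := hpconv j0 hnc
        have h2 : L j0 = 0 := hLconv j0 hnc
        have h3 : 0 < p j0 - L j0 := (hTmem j0).1 hj0
        linarith
      obtain ⟨i0, hi0e, hrtg⟩ := (UCV.cashAcc_iff hM0 e j0).1 hCj0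
      have hi0T : i0 ∉ T := fun h => by have := hc2 i0 h; linarith
      obtain ⟨x, y, hax, hxT, hyT, hxy⟩ := UCV.crossing hrtg hi0T hj0
      have hLx : 0 < L x := UCV.fixed_pos hM0 hpbar he hL0 hLfix hax hi0e
      have hsy : 0 < ∑ j ∈ T, M x j := by
        have h1 : M x y ≤ ∑ j ∈ T, M x j :=
          Finset.single_le_sum (fun j _ => hM0 x j) hyT
        have hxy' : 0 < M x y := hxy
        linarith
      have h0 : L x * ∑ j ∈ T, M x j = 0 := hc1 x (Finset.mem_compl.2 hxT)
      nlinarith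
  exact ⟨L, ⟨hL0, hLle, hLfix, hLconv⟩,
    fun q hq => core q hq.1 hq.2.1 hq.2.2.1 hq.2.2.2⟩
end
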